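/- arXiv:2302.12105 — 4 statements merged into one kernel-verified Lean document; each statement's English description precedes it below -/
import Mathlib

section
/- Let f(x) = g(x) + γ|x|₁ where g : ℝⁿ → ℝ is convex, C¹, with L-Lipschitz gradient, and γ > 0. Fix x ∈ ℝⁿ and let αₓ⁺ = {i : xᵢ > 0}, αₓ⁻ = {i : xᵢ < 0}, βₓ = {i : xᵢ = 0}. Suppose v ∈ ℝⁿ satisfies: xᵢ + vᵢ ≥ 0 for i ∈ αₓ⁺; xᵢ + vᵢ ≤ 0 for i ∈ αₓ⁻; vᵢ = 0 for i ∈ βₓ with ∂ᵢ⁻f(x) = 0; vᵢ ≥ 0 for i ∈ βₓ with ∂ᵢ⁻f(x) < 0; vᵢ ≤ 0 for i ∈ βₓ with ∂ᵢ⁻f(x) > 0. Then f(x + v) ≤ f(x) + ⟨∂⁻f(x), v⟩ + (L/2)|v|₂². -/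
open scoped RealInnerProductSpace BigOperators
open scoped Classical

noncomputable section

abbrev E (n : ℕ) := EuclideanSpace ℝ (Fin n)

/-- The convex-analysis subdifferential. -/
def subdiff {n : ℕ} (f : E n → ℝ) (x : E n) : Set (E n) :=
  {y | ∀ z, f z ≥ f x + (inner ℝ y (z - x) : ℝ)}

/-- `v` is the minimal-Euclidean-norm element of `∂f(x)`. -/
def IsMinNormSubgrad {n : ℕ} (f : E n → ℝ) (x v : E n) : Prop :=
  v ∈ subdiff f x ∧ ∀ y ∈ subdiff f x, ‖v‖ ≤ ‖y‖

/-- μ-strong convexity: `x ↦ f x - μ/2 ‖x‖²` is convex. -/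
def StronglyConvex {n : ℕ} (μ : ℝ) (f : E n → ℝ) : Prop :=
  ConvexOn ℝ Set.univ (fun x => f x - μ / 2 * ‖x‖ ^ 2)


open Filter Topology

/-!
Write `s := w - ∇g(x)`. Testing the subgradient inequality for `w` along a coordinate direction
and bounding `g` from above by the descent lemma shows `|sᵢ| ≤ γ` and `sᵢ xᵢ = γ |xᵢ|`; conversely,
by the first-order condition of convexity every such vector is a subgradient. On a coordinate with
`xᵢ = 0`, minimality of `‖w‖` therefore makes `wᵢ` the point of `[∇ᵢg(x) - γ, ∇ᵢg(x) + γ]` closest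
to `0`, which pins down `sᵢ = -γ sign wᵢ` whenever `wᵢ ≠ 0`. The sign conditions on `v` then say
exactly that `sᵢ (xᵢ + vᵢ) = γ |xᵢ + vᵢ|` for every `i`, so `⟨s, v⟩ = γ |x + v|₁ - γ |x|₁`, and
the claim is the descent lemma for `g` at `x` in direction `v` plus this identity.
-/

theorem le_of_forall_pos_lt_one_le_add_mul {b c M : ℝ}
    (h : ∀ t : ℝ, 0 < t → t < 1 → c ≤ b + M * t) : c ≤ b := by
  have hlim : Tendsto (fun t : ℝ => b + M * t) (𝓝[>] 0) (𝓝 b) := by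
    have : Continuous fun t : ℝ => b + M * t := by fun_prop
    simpa using (this.tendsto 0).mono_left nhdsWithin_le_nhds
  refine ge_of_tendsto hlim ?_
  filter_upwards [Ioo_mem_nhdsGT (zero_lt_one' ℝ)] with t ht
  exact h t ht.1 ht.2

/-- Proximal subgradients of `γ |·|` are subgradients. -/
theorem abs_le_and_mul_eq_abs_of_forall_mul_le {γ M a s : ℝ} (hγ : 0 ≤ γ)
    (h : ∀ t, s * t ≤ γ * (|a + t| - |a|) + M * t ^ 2) : |s| ≤ γ ∧ s * a = γ * |a| := by
  have hs_le : s ≤ γ := le_of_forall_pos_lt_one_le_add_mul (M := M) fun t ht _ => by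
    have := abs_add_le a t
    rw [abs_of_pos ht] at this
    exact le_of_mul_le_mul_right (by nlinarith [h t, mul_le_mul_of_nonneg_left this hγ]) ht
  have hneg_s_le : -s ≤ γ := le_of_forall_pos_lt_one_le_add_mul (M := M) fun t ht _ => by
    have := abs_add_le a (-t)
    rw [abs_neg, abs_of_pos ht] at this
    exact le_of_mul_le_mul_right (by nlinarith [h (-t), mul_le_mul_of_nonneg_left this hγ]) ht
  have hs : |s| ≤ γ := abs_le.2 ⟨by linarith, hs_le⟩
  refine ⟨hs, le_antisymm ?_ ?_⟩
  · calc s * a ≤ |s| * |a| := (le_abs_self _).trans (abs_mul s a).le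
      _ ≤ γ * |a| := mul_le_mul_of_nonneg_right hs (abs_nonneg a)
  · refine le_of_forall_pos_lt_one_le_add_mul (M := M * a ^ 2) fun t ht ht1 => ?_
    -- move `a` a fraction `t` of the way towards `0`
    have habs : |a + -(t * a)| = (1 - t) * |a| := by
      rw [show a + -(t * a) = (1 - t) * a by ring, abs_mul, abs_of_pos (by linarith)]
    have := h (-(t * a))
    rw [habs] at this
    exact le_of_mul_le_mul_right (by nlinarith) ht

theorem mul_sub_le_of_abs_le_of_mul_eq_abs {γ s a z : ℝ} (hs : |s| ≤ γ)
    (hsa : s * a = γ * |a|) : s * (z - a) ≤ γ * |z| - γ * |a| := by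
  have : s * z ≤ γ * |z| :=
    calc s * z ≤ |s| * |z| := (le_abs_self _).trans (abs_mul s z).le
      _ ≤ γ * |z| := mul_le_mul_of_nonneg_right hs (abs_nonneg z)
  linarith

theorem sub_eq_of_neg_of_forall_abs_le {a γ w : ℝ} (hw : |w - a| ≤ γ)
    (hmin : ∀ c, |c - a| ≤ γ → |w| ≤ |c|) (hneg : w < 0) : w - a = γ := by
  have hwa := abs_le.1 hw
  set c := min (a + γ) 0
  have hwc : w ≤ c := le_min (by linarith) hneg.le
  have hc : |c - a| ≤ γ := abs_le.2 ⟨by linarith, by linarith [min_le_left (a + γ) 0]⟩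
  have hcw : c ≤ w := by
    have := hmin c hc
    rw [abs_of_neg hneg, abs_of_nonpos (min_le_right _ _)] at this
    linarith
  rcases min_cases (a + γ) 0 with ⟨hmin_eq, _⟩ | ⟨hmin_eq, _⟩ <;>
    · change c = _ at hmin_eq
      linarith

theorem sub_eq_neg_of_pos_of_forall_abs_le {a γ w : ℝ} (hw : |w - a| ≤ γ)
    (hmin : ∀ c, |c - a| ≤ γ → |w| ≤ |c|) (hpos : 0 < w) : w - a = -γ := by
  have := sub_eq_of_neg_of_forall_abs_le (a := -a) (γ := γ) (w := -w)
    (by rwa [neg_sub_neg, abs_sub_comm])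
    (fun c hc => by
      rw [abs_neg, ← abs_neg c]
      exact hmin (-c) (by rwa [show -c - a = -(c - -a) by ring, abs_neg]))
    (by linarith)
  linarith

section Gradient

variable {F : Type*} [NormedAddCommGroup F] [InnerProductSpace ℝ F] [CompleteSpace F]
  {g : F → ℝ} {g' : F → F}

theorem hasDerivAt_comp_add_smul (hg' : ∀ x, HasGradientAt g (g' x) x) (y d : F) (t : ℝ) :
    HasDerivAt (fun s : ℝ => g (y + s • d)) ⟪g' (y + t • d), d⟫ t := by
  have hline : HasDerivAt (fun s : ℝ => y + s • d) d t := by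
    simpa using ((hasDerivAt_id t).smul_const d).const_add y
  have := (hg' (y + t • d)).hasFDerivAt.comp_hasDerivAt t hline
  simp only [InnerProductSpace.toDual_apply_apply] at this
  exact this

theorem ConvexOn.add_inner_gradient_le (hgc : ConvexOn ℝ Set.univ g)
    (hg' : ∀ x, HasGradientAt g (g' x) x) (x z : F) : g x + ⟪g' x, z - x⟫ ≤ g z := by
  have hline : ConvexOn ℝ Set.univ (fun s : ℝ => g (x + s • (z - x))) := by
    have heq : (fun s : ℝ => g (x + s • (z - x))) = g ∘ AffineMap.lineMap x z := by
      funext s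
      simp [AffineMap.lineMap_apply, add_comm]
    simpa [heq] using hgc.comp_affineMap (AffineMap.lineMap x z : ℝ →ᵃ[ℝ] F)
  have hslope := hline.le_slope_of_hasDerivAt (Set.mem_univ 0) (Set.mem_univ 1) one_pos
    (by simpa using hasDerivAt_comp_add_smul hg' x (z - x) 0)
  simp only [slope_def_field, one_smul, add_sub_cancel, zero_smul, add_zero, sub_zero, div_one]
    at hslope
  linarith

theorem le_add_inner_add_sq_of_lipschitz_gradient (hg' : ∀ x, HasGradientAt g (g' x) x) {L : ℝ}
    (hLip : ∀ a b, ‖g' a - g' b‖ ≤ L * ‖a - b‖) (y d : F) :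
    g (y + d) ≤ g y + ⟪g' y, d⟫ + L / 2 * ‖d‖ ^ 2 := by
  set ψ : ℝ → ℝ := fun t => g (y + t • d) - t * ⟪g' y, d⟫ - L / 2 * t ^ 2 * ‖d‖ ^ 2
  have hψ' : ∀ t, HasDerivAt ψ (⟪g' (y + t • d) - g' y, d⟫ - L * t * ‖d‖ ^ 2) t := by
    intro t
    have h1 := ((hasDerivAt_comp_add_smul hg' y d t).sub
      ((hasDerivAt_id t).mul_const ⟪g' y, d⟫)).sub
      (((hasDerivAt_pow 2 t).const_mul (L / 2)).mul_const (‖d‖ ^ 2))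
    exact h1.congr_deriv (by rw [inner_sub_left]; ring_nf)
  have hanti : AntitoneOn ψ (Set.Icc 0 1) := by
    refine antitoneOn_of_hasDerivWithinAt_nonpos (convex_Icc 0 1)
      (fun t _ => (hψ' t).continuousAt.continuousWithinAt)
      (fun t _ => (hψ' t).hasDerivWithinAt) fun t ht => ?_
    rw [interior_Icc] at ht
    have : ⟪g' (y + t • d) - g' y, d⟫ ≤ L * t * ‖d‖ ^ 2 :=
      calc ⟪g' (y + t • d) - g' y, d⟫ ≤ ‖g' (y + t • d) - g' y‖ * ‖d‖ := real_inner_le_norm _ _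
        _ ≤ L * ‖(y + t • d) - y‖ * ‖d‖ := by gcongr; exact hLip _ _
        _ = L * t * ‖d‖ ^ 2 := by
          rw [add_sub_cancel_left, norm_smul, Real.norm_of_nonneg ht.1.le]
          ring
    linarith
  have hψ0 : ψ 0 = g y := by simp [ψ]
  have hψ1 : ψ 1 = g (y + d) - ⟪g' y, d⟫ - L / 2 * ‖d‖ ^ 2 := by simp [ψ]
  have := hanti (Set.left_mem_Icc.2 zero_le_one) (Set.right_mem_Icc.2 zero_le_one) zero_le_one
  linarith

end Gradient

section L1

variable {n : ℕ}

theorem inner_eq_sum_mul (u v : E n) : ⟪u, v⟫ = ∑ i, u i * v i := by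
  simp [PiLp.inner_apply, mul_comm]

theorem sum_abs_add_single (x : E n) (i : Fin n) (t : ℝ) :
    ∑ j, |(x + EuclideanSpace.single i t) j| = ∑ j, |x j| + (|x i + t| - |x i|) := by
  rw [← sub_eq_iff_eq_add', ← Finset.sum_sub_distrib, Finset.sum_eq_single i]
  · simp
  · intro j _ hj
    simp [hj]
  · simp

variable {g : E n → ℝ} {g' : E n → E n} {γ : ℝ} {x y : E n}

theorem mul_le_of_mem_subdiff_add_l1 (hg' : ∀ x, HasGradientAt g (g' x) x) {L : ℝ}
    (hLip : ∀ a b, ‖g' a - g' b‖ ≤ L * ‖a - b‖)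
    (hy : y ∈ subdiff (fun z => g z + γ * ∑ i, |z i|) x) (i : Fin n) (t : ℝ) :
    (y i - g' x i) * t ≤ γ * (|x i + t| - |x i|) + L / 2 * t ^ 2 := by
  have hsub := hy (x + EuclideanSpace.single i t)
  have hdesc := le_add_inner_add_sq_of_lipschitz_gradient hg' hLip x (EuclideanSpace.single i t)
  simp only [add_sub_cancel_left, sum_abs_add_single, EuclideanSpace.inner_single_right,
    PiLp.norm_single, Real.norm_eq_abs, sq_abs, Real.ringHom_apply] at hsub hdesc
  nlinarith

theorem mem_subdiff_add_l1_iff (hgc : ConvexOn ℝ Set.univ g)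
    (hg' : ∀ x, HasGradientAt g (g' x) x) {L : ℝ} (hLip : ∀ a b, ‖g' a - g' b‖ ≤ L * ‖a - b‖)
    (hγ : 0 ≤ γ) :
    y ∈ subdiff (fun z => g z + γ * ∑ i, |z i|) x ↔
      ∀ i, |y i - g' x i| ≤ γ ∧ (y i - g' x i) * x i = γ * |x i| := by
  refine ⟨fun hy i => abs_le_and_mul_eq_abs_of_forall_mul_le hγ
    (mul_le_of_mem_subdiff_add_l1 hg' hLip hy i), fun hy z => ?_⟩
  have hsplit : ⟪y, z - x⟫ = ⟪g' x, z - x⟫ + ∑ i, (y i - g' x i) * (z i - x i) := by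
    rw [inner_eq_sum_mul, inner_eq_sum_mul, ← Finset.sum_add_distrib]
    refine Finset.sum_congr rfl fun i _ => ?_
    simp only [PiLp.sub_apply]
    ring
  have hl1 : ∑ i, (y i - g' x i) * (z i - x i) ≤ γ * ∑ i, |z i| - γ * ∑ i, |x i| := by
    rw [Finset.mul_sum, Finset.mul_sum, ← Finset.sum_sub_distrib]
    exact Finset.sum_le_sum fun i _ => mul_sub_le_of_abs_le_of_mul_eq_abs (hy i).1 (hy i).2
  have := hgc.add_inner_gradient_le hg' x z
  linarith

theorem abs_le_abs_of_isMinNormSubgrad (hgc : ConvexOn ℝ Set.univ g)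
    (hg' : ∀ x, HasGradientAt g (g' x) x) {L : ℝ} (hLip : ∀ a b, ‖g' a - g' b‖ ≤ L * ‖a - b‖)
    (hγ : 0 ≤ γ) {w : E n} (hw : IsMinNormSubgrad (fun z => g z + γ * ∑ i, |z i|) x w)
    {i : Fin n} (hxi : x i = 0) {c : ℝ} (hc : |c - g' x i| ≤ γ) : |w i| ≤ |c| := by
  have hw_coord := (mem_subdiff_add_l1_iff hgc hg' hLip hγ).1 hw.1
  set y := w + EuclideanSpace.single i (c - w i)
  have hy_apply : ∀ j, y j = if j = i then c else w j := by
    intro j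
    by_cases hj : j = i
    · subst hj
      simp [y]
    · simp [y, hj]
  have hy : y ∈ subdiff (fun z => g z + γ * ∑ i, |z i|) x := by
    refine (mem_subdiff_add_l1_iff hgc hg' hLip hγ).2 fun j => ?_
    rw [hy_apply]
    split_ifs with hj
    · subst hj
      simp [hc, hxi]
    · exact hw_coord j
  have hnorm : ‖y‖ ^ 2 = ‖w‖ ^ 2 + (c ^ 2 - w i ^ 2) := by
    rw [norm_add_sq_real, EuclideanSpace.inner_single_right, PiLp.norm_single]
    simp only [Real.ringHom_apply, Real.norm_eq_abs, sq_abs]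
    ring
  have := pow_le_pow_left₀ (norm_nonneg w) (hw.2 y hy) 2
  exact sq_le_sq.1 (by linarith)

theorem sub_gradient_mul_add_eq_abs (hgc : ConvexOn ℝ Set.univ g)
    (hg' : ∀ x, HasGradientAt g (g' x) x) {L : ℝ} (hLip : ∀ a b, ‖g' a - g' b‖ ≤ L * ‖a - b‖)
    (hγ : 0 ≤ γ) {v w : E n} (hw : IsMinNormSubgrad (fun z => g z + γ * ∑ i, |z i|) x w)
    (h1 : ∀ i, 0 < x i → 0 ≤ x i + v i)
    (h2 : ∀ i, x i < 0 → x i + v i ≤ 0)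
    (h3 : ∀ i, x i = 0 → w i = 0 → v i = 0)
    (h4 : ∀ i, x i = 0 → w i < 0 → 0 ≤ v i)
    (h5 : ∀ i, x i = 0 → 0 < w i → v i ≤ 0) (i : Fin n) :
    (w i - g' x i) * (x i + v i) = γ * |x i + v i| := by
  obtain ⟨hs, hsx⟩ := (mem_subdiff_add_l1_iff hgc hg' hLip hγ).1 hw.1 i
  rcases lt_trichotomy (x i) 0 with hx | hx | hx
  · have hs_eq : w i - g' x i = -γ := mul_right_cancel₀ hx.ne (by rw [hsx, abs_of_neg hx]; ring)
    rw [hs_eq, abs_of_nonpos (h2 i hx)]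
    ring
  · have hmin : ∀ c, |c - g' x i| ≤ γ → |w i| ≤ |c| := fun c hc =>
      abs_le_abs_of_isMinNormSubgrad hgc hg' hLip hγ hw hx hc
    rw [hx, zero_add]
    rcases lt_trichotomy (w i) 0 with hwi | hwi | hwi
    · rw [sub_eq_of_neg_of_forall_abs_le hs hmin hwi, abs_of_nonneg (h4 i hx hwi)]
    · simp [h3 i hx hwi]
    · rw [sub_eq_neg_of_pos_of_forall_abs_le hs hmin hwi, abs_of_nonpos (h5 i hx hwi)]
      ring
  · have hs_eq : w i - g' x i = γ := mul_right_cancel₀ hx.ne' (by rw [hsx, abs_of_pos hx])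
    rw [hs_eq, abs_of_nonneg (h1 i hx)]

end L1

theorem stmt_5_general {n : ℕ} (g : E n → ℝ) (hgc : ConvexOn ℝ Set.univ g)
    (g' : E n → E n) (hg' : ∀ x, HasGradientAt g (g' x) x)
    (L : ℝ) (hLip : ∀ a b, ‖g' a - g' b‖ ≤ L * ‖a - b‖)
    (γ : ℝ) (hγ : 0 < γ)
    (f : E n → ℝ) (hf : ∀ z, f z = g z + γ * ∑ i, |z i|)
    (x v w : E n) (hw : IsMinNormSubgrad f x w)
    (h1 : ∀ i, 0 < x i → 0 ≤ x i + v i)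
    (h2 : ∀ i, x i < 0 → x i + v i ≤ 0)
    (h3 : ∀ i, x i = 0 → w i = 0 → v i = 0)
    (h4 : ∀ i, x i = 0 → w i < 0 → 0 ≤ v i)
    (h5 : ∀ i, x i = 0 → 0 < w i → v i ≤ 0) :
    f (x + v) ≤ f x + (inner ℝ w v : ℝ) + L / 2 * ‖v‖ ^ 2 := by
  obtain rfl : f = fun z => g z + γ * ∑ i, |z i| := funext hf
  have hcoord := sub_gradient_mul_add_eq_abs hgc hg' hLip hγ.le hw h1 h2 h3 h4 h5
  have hx_coord i := ((mem_subdiff_add_l1_iff hgc hg' hLip hγ.le).1 hw.1 i).2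
  have hinner : ⟪w, v⟫ = ⟪g' x, v⟫ + (γ * ∑ i, |x i + v i| - γ * ∑ i, |x i|) := by
    rw [Finset.mul_sum, Finset.mul_sum, ← Finset.sum_sub_distrib, inner_eq_sum_mul,
      inner_eq_sum_mul, ← Finset.sum_add_distrib]
    refine Finset.sum_congr rfl fun i _ => ?_
    rw [← hcoord i, ← hx_coord i]
    ring
  have hdesc := le_add_inner_add_sq_of_lipschitz_gradient hg' hLip x v
  simp only [PiLp.add_apply]
  linarith

theorem stmt_5 {n : ℕ} (g : E n → ℝ) (hgc : ConvexOn ℝ Set.univ g)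
    (hg1 : ContDiff ℝ 1 g) (g' : E n → E n) (hg' : ∀ x, HasGradientAt g (g' x) x)
    (L : ℝ) (hLip : ∀ a b, ‖g' a - g' b‖ ≤ L * ‖a - b‖)
    (γ : ℝ) (hγ : 0 < γ)
    (f : E n → ℝ) (hf : ∀ z, f z = g z + γ * ∑ i, |z i|)
    (x v w : E n) (hw : IsMinNormSubgrad f x w)
    (h1 : ∀ i, 0 < x i → 0 ≤ x i + v i)
    (h2 : ∀ i, x i < 0 → x i + v i ≤ 0)
    (h3 : ∀ i, x i = 0 → w i = 0 → v i = 0)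
    (h4 : ∀ i, x i = 0 → w i < 0 → 0 ≤ v i)
    (h5 : ∀ i, x i = 0 → 0 < w i → v i ≤ 0) :
    f (x + v) ≤ f x + (inner ℝ w v : ℝ) + L / 2 * ‖v‖ ^ 2 :=
  stmt_5_general g hgc g' hg' L hLip γ hγ f hf x v w hw h1 h2 h3 h4 h5

end
end

section
/- Let f(x) = g(x) + γ|x|₁ with g C¹, μ-strongly convex, ∇g L-Lipschitz, γ > 0, and step-size h = 1/L. Let x ∈ ℝⁿ and suppose some component strictly changes sign in xᵗᵉᵐᵖ = x − h∂⁻f(x), i.e. there exists i with xᵢ·xᵢᵗᵉᵐᵖ < 0. Define x' by x'ᵢ = xᵢ if sign(xᵢᵗᵉᵐᵖ·xᵢ) > 0 and x'ᵢ = 0 otherwise, and x'' = x' + v'' where v''ᵢ = −h∂ᵢ⁻f(x) if sign(xᵢᵗᵉᵐᵖ·xᵢ) > 0 and v''ᵢ = −h∂ᵢ⁻f(x') otherwise. Then min(f(x'), f(x'')) − f(x*) ≤ (1 + μ/L)⁻¹ (f(x) − f(x*)). -/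
open scoped RealInnerProductSpace BigOperators
open scoped Classical

noncomputable section

/-!
Write `v = ∇g x + γ s` and `v' = ∇g x' + γ s'` with `s ∈ ∂‖·‖₁(x)` and `s' ∈ ∂‖·‖₁(x')`.
Zeroing the crossing coordinates keeps `s` a subgradient of `‖·‖₁` at `x'`, so the descent lemma
for `g` gives `f x' + L/2 ‖x - x'‖² ≤ f x`. Minimality of `‖v'‖` makes `s'` a subgradient of
`‖·‖₁` at `x''` too, and the descent lemma gives
`f x'' ≤ f x' + (‖v' + L (x'' - x')‖² - ‖v'‖²) / (2L)`. The vector `v' + L (x'' - x')` equals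
`∇g x' - ∇g x` on the kept coordinates and `0` elsewhere, hence `f x'' ≤ f x - ‖v'‖² / (2L)`.
Strong convexity gives `‖v'‖² ≥ 2μ (f x' - f z)` for every `z`, and the two bounds on
`min (f x') (f x'')` combine to the factor `(1 + μ/L)⁻¹`.
-/

open Filter Topology

section ConvexAnalysis

variable {F : Type*} [NormedAddCommGroup F] [InnerProductSpace ℝ F]

theorem HasFDerivAt.hasDerivAt_add_smul {φ : F → ℝ} {φ' : F →L[ℝ] ℝ} {a d : F} {t : ℝ}
    (hφ : HasFDerivAt φ φ' (a + t • d)) : HasDerivAt (fun s : ℝ => φ (a + s • d)) (φ' d) t := by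
  have hline : HasDerivAt (fun s : ℝ => a + s • d) d t := by
    simpa using ((hasDerivAt_id t).smul_const d).const_add a
  exact hφ.comp_hasDerivAt t hline

theorem ConvexOn.le_of_le_add_of_hasFDerivAt {φ h : F → ℝ} {φ' : F →L[ℝ] ℝ} {w v : F}
    (hh : ConvexOn ℝ Set.univ h) (hφ : HasFDerivAt φ φ' w)
    (hv : ∀ z, φ w + h w + ⟪v, z - w⟫ ≤ φ z + h z) (z : F) :
    h w + ⟪v, z - w⟫ - φ' (z - w) ≤ h z := by
  -- bound `h (w + t • d)` by its chord, then let `t → 0⁺` in the subgradient inequality there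
  set d := z - w
  have hρ : HasDerivAt (fun t : ℝ => φ (w + t • d)) (φ' d) 0 :=
    HasFDerivAt.hasDerivAt_add_smul (by simpa using hφ)
  have hslope : Tendsto (slope (fun t : ℝ => φ (w + t • d)) 0) (𝓝[>] 0) (𝓝 (φ' d)) :=
    (hasDerivAt_iff_tendsto_slope.mp hρ).mono_left (nhdsWithin_mono 0 fun t ht => ne_of_gt ht)
  suffices h w + ⟪v, d⟫ - h z ≤ φ' d by linarith
  refine ge_of_tendsto hslope ?_
  filter_upwards [Ioo_mem_nhdsGT one_pos] with t ⟨ht0, ht1⟩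
  have hconv : h (w + t • d) ≤ (1 - t) * h w + t * h z := by
    have := hh.2 (Set.mem_univ w) (Set.mem_univ z) (by linarith : 0 ≤ 1 - t) ht0.le (by ring)
    rwa [show (1 - t) • w + t • z = w + t • d by simp only [d, smul_sub, sub_smul, one_smul]; abel]
      at this
  have hsub := hv (w + t • d)
  rw [add_sub_cancel_left, real_inner_smul_right] at hsub
  rw [slope_def_field, sub_zero, le_div_iff₀ ht0]
  simp only [zero_smul, add_zero]
  nlinarith

theorem ConvexOn.add_le_of_hasFDerivAt {h : F → ℝ} {h' : F →L[ℝ] ℝ} {w : F}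
    (hh : ConvexOn ℝ Set.univ h) (hd : HasFDerivAt h h' w) (z : F) : h w + h' (z - w) ≤ h z := by
  have := hh.le_of_le_add_of_hasFDerivAt (v := 0) hd.neg (by simp) z
  simp only [inner_zero_left, neg_apply, sub_neg_eq_add, add_zero] at this
  exact this

theorem le_add_inner_add_of_lipschitz_gradient [CompleteSpace F] {g : F → ℝ} {g' : F → F}
    {L : ℝ} (hg : ∀ z, HasGradientAt g (g' z) z) (hLip : ∀ a b, ‖g' a - g' b‖ ≤ L * ‖a - b‖)
    (a b : F) : g b ≤ g a + ⟪g' a, b - a⟫ + L / 2 * ‖b - a‖ ^ 2 := by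
  set d := b - a
  set χ : ℝ → ℝ := fun t => g (a + t • d) - t * ⟪g' a, d⟫ - t ^ 2 * (L / 2 * ‖d‖ ^ 2)
  have hχ : ∀ t, HasDerivAt χ (⟪g' (a + t • d), d⟫ - ⟪g' a, d⟫ - 2 * t * (L / 2 * ‖d‖ ^ 2)) t := by
    intro t
    have hline : HasDerivAt (fun s : ℝ => g (a + s • d)) ⟪g' (a + t • d), d⟫ t := by
      simpa using (hg (a + t • d)).hasFDerivAt.hasDerivAt_add_smul
    have hlin : HasDerivAt (fun s : ℝ => s * ⟪g' a, d⟫) ⟪g' a, d⟫ t := by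
      simpa using (hasDerivAt_id t).mul_const ⟪g' a, d⟫
    have hquad :
        HasDerivAt (fun s : ℝ => s ^ 2 * (L / 2 * ‖d‖ ^ 2)) (2 * t * (L / 2 * ‖d‖ ^ 2)) t := by
      simpa using (hasDerivAt_pow 2 t).mul_const (L / 2 * ‖d‖ ^ 2)
    exact (hline.sub hlin).sub hquad
  have hanti : AntitoneOn χ (Set.Icc 0 1) := by
    have hdiff : Differentiable ℝ χ := fun t => (hχ t).differentiableAt
    refine antitoneOn_of_deriv_nonpos (convex_Icc 0 1) hdiff.continuous.continuousOn
      hdiff.differentiableOn fun t ht => ?_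
    rw [interior_Icc] at ht
    have hcs : ⟪g' (a + t • d) - g' a, d⟫ ≤ L * (t * ‖d‖) * ‖d‖ := by
      refine (real_inner_le_norm _ _).trans (mul_le_mul_of_nonneg_right ?_ (norm_nonneg d))
      simpa [norm_smul, abs_of_pos ht.1] using hLip (a + t • d) a
    rw [(hχ t).deriv, ← inner_sub_left]
    nlinarith
  have := hanti (Set.left_mem_Icc.2 zero_le_one) (Set.right_mem_Icc.2 zero_le_one) zero_le_one
  simp only [χ, zero_smul, add_zero, one_smul, add_sub_cancel, d] at this
  linarith

theorem inner_add_half_mul_norm_sq_le {u d : F} {L r : ℝ} (hL : 0 < L) (h : ‖u + L • d‖ ≤ L * r) :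
    ⟪u, d⟫ + L / 2 * ‖d‖ ^ 2 ≤ L / 2 * r ^ 2 - ‖u‖ ^ 2 / (2 * L) := by
  have hexp : ‖u + L • d‖ ^ 2 = ‖u‖ ^ 2 + 2 * L * ⟪u, d⟫ + L ^ 2 * ‖d‖ ^ 2 := by
    rw [norm_add_sq_real, real_inner_smul_right, norm_smul, Real.norm_eq_abs, abs_of_pos hL]
    ring
  have hsq := pow_le_pow_left₀ (norm_nonneg _) h 2
  rw [le_sub_iff_add_le, ← sub_nonneg]
  have : 0 ≤ (L / 2 * r ^ 2 - ‖u‖ ^ 2 / (2 * L) - (⟪u, d⟫ + L / 2 * ‖d‖ ^ 2)) * (2 * L) := by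
    field_simp
    nlinarith
  nlinarith

theorem two_mul_sub_le_norm_sq {f : F → ℝ} {μ : ℝ} {a u z : F} (hμ : 0 < μ)
    (h : f a + ⟪u, z - a⟫ + μ / 2 * ‖z - a‖ ^ 2 ≤ f z) : 2 * μ * (f a - f z) ≤ ‖u‖ ^ 2 := by
  have hexp : ‖u + μ • (z - a)‖ ^ 2 = ‖u‖ ^ 2 + 2 * μ * ⟪u, z - a⟫ + μ ^ 2 * ‖z - a‖ ^ 2 := by
    rw [norm_add_sq_real, real_inner_smul_right, norm_smul, Real.norm_eq_abs, abs_of_pos hμ]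
    ring
  nlinarith [sq_nonneg ‖u + μ • (z - a)‖]

end ConvexAnalysis

theorem Real.sign_pos_iff {t : ℝ} : 0 < Real.sign t ↔ 0 < t := by
  rcases lt_trichotomy t 0 with h | rfl | h
  · simp [Real.sign_of_neg h, h.le.not_gt]
  · simp
  · simp [Real.sign_of_pos h, h]

-- The point `c` of `[a - γ, a + γ]` nearest to `0` is the soft thresholding `a - γ sign c`.
theorem sub_mul_self_eq_neg_mul_abs_of_forall_sq_le {a c γ : ℝ} (hc : |c - a| ≤ γ)
    (hmin : ∀ d, |d - a| ≤ γ → c ^ 2 ≤ d ^ 2) : (c - a) * c = -(γ * |c|) := by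
  rw [abs_le] at hc
  rcases lt_trichotomy c 0 with hneg | rfl | hpos
  · rw [abs_of_neg hneg]
    rcases le_or_gt (a + γ) 0 with h | h
    · have := hmin (a + γ) (by rw [add_sub_cancel_left, abs_of_nonneg (by linarith)])
      nlinarith
    · have := hmin 0 (abs_le.2 ⟨by linarith, by linarith⟩)
      nlinarith
  · simp
  · rw [abs_of_pos hpos]
    rcases le_or_gt 0 (a - γ) with h | h
    · have := hmin (a - γ) (by rw [sub_sub_cancel_left, abs_neg, abs_of_nonneg (by linarith)])
      nlinarith
    · have := hmin 0 (abs_le.2 ⟨by linarith, by linarith⟩)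
      nlinarith

theorem StronglyConvex.add_inner_add_le {n : ℕ} {μ : ℝ} {g : E n → ℝ} {p w : E n}
    (hsc : StronglyConvex μ g) (hg : HasGradientAt g p w) (z : E n) :
    g w + ⟪p, z - w⟫ + μ / 2 * ‖z - w‖ ^ 2 ≤ g z := by
  have hd := hg.hasFDerivAt.sub ((hasStrictFDerivAt_norm_sq w).hasFDerivAt.const_mul (μ / 2))
  have := hsc.add_le_of_hasFDerivAt hd z
  have hz : ‖z‖ ^ 2 = ‖w‖ ^ 2 + 2 * ⟪w, z - w⟫ + ‖z - w‖ ^ 2 := by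
    simpa using norm_add_sq_real w (z - w)
  simp only [sub_apply, smul_apply, InnerProductSpace.toDual_apply_apply, innerSL_apply_apply,
    smul_eq_mul, nsmul_eq_mul, Nat.cast_ofNat] at this
  linear_combination this - μ / 2 * hz

section L1

variable {n : ℕ}

theorem real_inner_eq_sum (a b : E n) : ⟪a, b⟫ = ∑ i, a i * b i := by
  simp [PiLp.inner_apply, mul_comm]

theorem convexOn_sum_abs : ConvexOn ℝ Set.univ (fun z : E n => ∑ i, |z i|) := by
  refine ⟨convex_univ, fun x _ y _ a b ha hb _ => ?_⟩
  simp only [smul_eq_mul, Finset.mul_sum, ← Finset.sum_add_distrib]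
  refine Finset.sum_le_sum fun i _ => ?_
  calc |(a • x + b • y) i| ≤ |a * x i| + |b * y i| := by simpa using abs_add_le (a * x i) (b * y i)
    _ = a * |x i| + b * |y i| := by rw [abs_mul, abs_mul, abs_of_nonneg ha, abs_of_nonneg hb]

/-- `s ∈ ∂‖·‖₁(w)`, described coordinatewise. -/
def IsL1Subgrad (w s : E n) : Prop := ∀ i, |s i| ≤ 1 ∧ s i * w i = |w i|

variable {w s : E n}

theorem IsL1Subgrad.inner_eq (hs : IsL1Subgrad w s) : ⟪s, w⟫ = ∑ i, |w i| := by
  rw [real_inner_eq_sum]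
  exact Finset.sum_congr rfl fun i _ => (hs i).2

theorem IsL1Subgrad.add_inner_le (hs : IsL1Subgrad w s) (z : E n) :
    ∑ i, |w i| + ⟪s, z - w⟫ ≤ ∑ i, |z i| := by
  rw [inner_sub_right, hs.inner_eq, add_sub_cancel, real_inner_eq_sum]
  refine Finset.sum_le_sum fun i _ => (le_abs_self _).trans ?_
  rw [abs_mul]
  exact mul_le_of_le_one_left (abs_nonneg _) (hs i).1

theorem isL1Subgrad_of_forall_add_inner_le (h : ∀ z, ∑ i, |w i| + ⟪s, z - w⟫ ≤ ∑ i, |z i|) :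
    IsL1Subgrad w s := by
  intro i
  have hline : ∀ t : ℝ, |w i| + t * s i ≤ |w i + t| := by
    intro t
    have hsum :
        ∑ j, |(w + t • EuclideanSpace.single i 1 : E n) j| - ∑ j, |w j| = |w i + t| - |w i| := by
      rw [← Finset.sum_sub_distrib, Finset.sum_eq_single i (fun j _ hj => by simp [hj]) (by simp)]
      simp
    have := h (w + t • EuclideanSpace.single i 1)
    rw [add_sub_cancel_left, real_inner_smul_right, EuclideanSpace.inner_single_right] at this
    simp only [one_mul, conj_trivial] at this
    linarith
  have hone := hline 1
  have hmone := hline (-1)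
  have hzero := hline (-w i)
  rw [add_neg_cancel, abs_zero] at hzero
  have hs1 : |s i| ≤ 1 := abs_le.2
    ⟨by linarith [abs_add_le (w i) (-1), abs_neg (1 : ℝ), (abs_one : |(1 : ℝ)| = 1)],
      by linarith [abs_add_le (w i) 1, (abs_one : |(1 : ℝ)| = 1)]⟩
  have hle : s i * w i ≤ |w i| := by
    rw [← one_mul |w i|]
    exact (le_abs_self _).trans (by rw [abs_mul]; gcongr)
  exact ⟨hs1, by linarith⟩

theorem norm_le_norm_of_forall_abs_le {a b : E n} (h : ∀ i, |a i| ≤ |b i|) : ‖a‖ ≤ ‖b‖ := by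
  rw [EuclideanSpace.norm_eq, EuclideanSpace.norm_eq]
  gcongr with i
  exact h i

theorem IsL1Subgrad.apply_eq_sign (hs : IsL1Subgrad w s) {i : Fin n} (hi : w i ≠ 0) :
    s i = Real.sign (w i) := by
  obtain ⟨hs1, hsw⟩ := hs i
  rcases hi.lt_or_gt with h | h
  · rw [Real.sign_of_neg h]
    rw [abs_of_neg h] at hsw
    nlinarith
  · rw [Real.sign_of_pos h]
    rw [abs_of_pos h] at hsw
    nlinarith

theorem IsL1Subgrad.mul_eq_abs_of_mul_pos (hs : IsL1Subgrad w s) {i : Fin n} {y : ℝ}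
    (hy : 0 < y * w i) : s i * y = |y| := by
  rw [hs.apply_eq_sign (by rintro h; simp [h] at hy)]
  rcases lt_or_gt_of_ne (show w i ≠ 0 by rintro h; simp [h] at hy) with h | h
  · rw [Real.sign_of_neg h, abs_of_neg (by nlinarith)]; ring
  · rw [Real.sign_of_pos h, abs_of_pos (by nlinarith)]; ring

end L1

section Composite

variable {n : ℕ} {g f : E n → ℝ} {g' : E n → E n} {L γ : ℝ} {p w v s : E n}

theorem exists_isL1Subgrad_of_mem_subdiff (hγ : 0 < γ) (hg : HasGradientAt g p w)
    (hf : ∀ z, f z = g z + γ * ∑ i, |z i|) (hv : v ∈ subdiff f w) :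
    ∃ s, IsL1Subgrad w s ∧ v = p + γ • s := by
  refine ⟨γ⁻¹ • (v - p), isL1Subgrad_of_forall_add_inner_le fun z => ?_, by
    rw [smul_inv_smul₀ hγ.ne', add_sub_cancel]⟩
  have hsum : ∀ z, g w + γ * ∑ i, |w i| + ⟪v, z - w⟫ ≤ g z + γ * ∑ i, |z i| := fun z => by
    simpa [hf, add_assoc] using hv z
  have hl1 := ((convexOn_sum_abs (n := n)).smul hγ.le).le_of_le_add_of_hasFDerivAt
    hg.hasFDerivAt hsum z
  simp only [smul_eq_mul, InnerProductSpace.toDual_apply_apply] at hl1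
  rw [real_inner_smul_left, inner_sub_left]
  calc ∑ i, |w i| + γ⁻¹ * (⟪v, z - w⟫ - ⟪p, z - w⟫)
      = γ⁻¹ * (γ * ∑ i, |w i| + ⟪v, z - w⟫ - ⟪p, z - w⟫) := by
        field_simp
        ring
    _ ≤ γ⁻¹ * (γ * ∑ i, |z i|) := by gcongr
    _ = ∑ i, |z i| := inv_mul_cancel_left₀ hγ.ne' _

theorem IsL1Subgrad.add_inner_add_le {μ : ℝ} (hγ : 0 ≤ γ) (hsc : StronglyConvex μ g)
    (hg : HasGradientAt g p w) (hf : ∀ z, f z = g z + γ * ∑ i, |z i|) (hs : IsL1Subgrad w s)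
    (z : E n) : f w + ⟪p + γ • s, z - w⟫ + μ / 2 * ‖z - w‖ ^ 2 ≤ f z := by
  have hl1 := mul_le_mul_of_nonneg_left (hs.add_inner_le z) hγ
  rw [hf, hf, inner_add_left, real_inner_smul_left]
  linarith [hsc.add_inner_add_le hg z]

theorem IsMinNormSubgrad.mul_eq_neg_abs {μ : ℝ} (hγ : 0 < γ) (hμ : 0 ≤ μ)
    (hsc : StronglyConvex μ g) (hg : HasGradientAt g p w) (hf : ∀ z, f z = g z + γ * ∑ i, |z i|)
    (hv : IsMinNormSubgrad f w v) (hs : IsL1Subgrad w s) (hvs : v = p + γ • s) {i : Fin n}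
    (hi : w i = 0) : s i * v i = -|v i| := by
  have hvi : v i - p i = γ * s i := by rw [hvs]; simp
  suffices (v i - p i) * v i = -(γ * |v i|) by
    rw [hvi, mul_assoc] at this
    exact mul_left_cancel₀ hγ.ne' (by linarith)
  refine sub_mul_self_eq_neg_mul_abs_of_forall_sq_le ?_ fun d hd => ?_
  · rw [hvi, abs_mul, abs_of_pos hγ]
    exact mul_le_of_le_one_right hγ.le (hs i).1
  -- replacing `v i` by any `d` with `|d - p i| ≤ γ` stays inside `∂f(w)`
  set e : E n := EuclideanSpace.single i 1
  set s' := s + ((d - v i) / γ) • e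
  have hs' : IsL1Subgrad w s' := by
    intro j
    by_cases hj : j = i
    · subst hj
      have hs'j : s' j = (d - p j) / γ := by
        simp [s', e]
        field_simp
        linarith
      rw [hs'j, hi, abs_div, abs_of_pos hγ, div_le_one hγ]
      exact ⟨hd, by simp⟩
    · simpa [s', e, hj] using hs j
  have hy : v + (d - v i) • e ∈ subdiff f w := by
    intro z
    have := hs'.add_inner_add_le hγ.le hsc hg hf z
    have hy : p + γ • s' = v + (d - v i) • e := by
      rw [smul_add, smul_smul, mul_div_cancel₀ _ hγ.ne', ← add_assoc, ← hvs]
    rw [hy] at this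
    nlinarith [sq_nonneg ‖z - w‖]
  have hsq : ‖v + (d - v i) • e‖ ^ 2 = ‖v‖ ^ 2 - v i ^ 2 + d ^ 2 := by
    rw [norm_add_sq_real, real_inner_smul_right, EuclideanSpace.inner_single_right, norm_smul,
      PiLp.norm_single]
    simp only [conj_trivial, Real.norm_eq_abs, norm_one, mul_one, sq_abs]
    ring
  nlinarith [pow_le_pow_left₀ (norm_nonneg v) (hv.2 _ hy) 2]

theorem two_mul_sub_le_norm_sq_of_mem_subdiff {μ : ℝ} (hμ : 0 < μ) (hγ : 0 < γ)
    (hsc : StronglyConvex μ g) (hg : HasGradientAt g p w)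
    (hf : ∀ z, f z = g z + γ * ∑ i, |z i|) (hv : v ∈ subdiff f w) (z : E n) :
    2 * μ * (f w - f z) ≤ ‖v‖ ^ 2 := by
  obtain ⟨s, hs, rfl⟩ := exists_isL1Subgrad_of_mem_subdiff hγ hg hf hv
  exact two_mul_sub_le_norm_sq hμ (hs.add_inner_add_le hγ.le hsc hg hf z)

theorem le_add_inner_add_of_isL1Subgrad (hg : ∀ z, HasGradientAt g (g' z) z)
    (hLip : ∀ a b, ‖g' a - g' b‖ ≤ L * ‖a - b‖) (hf : ∀ z, f z = g z + γ * ∑ i, |z i|)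
    {a b s : E n} (ha : IsL1Subgrad a s) (hb : IsL1Subgrad b s) :
    f b ≤ f a + ⟪g' a + γ • s, b - a⟫ + L / 2 * ‖b - a‖ ^ 2 := by
  have hl1 : ⟪s, b - a⟫ = ∑ i, |b i| - ∑ i, |a i| := by
    rw [inner_sub_right, ha.inner_eq, hb.inner_eq]
  rw [hf, hf, inner_add_left, real_inner_smul_left, hl1]
  linarith [le_add_inner_add_of_lipschitz_gradient hg hLip a b]

theorem add_half_mul_norm_sq_le_of_zero_coords (hγ : 0 < γ) (hg : ∀ z, HasGradientAt g (g' z) z)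
    (hLip : ∀ a b, ‖g' a - g' b‖ ≤ L * ‖a - b‖) (hf : ∀ z, f z = g z + γ * ∑ i, |z i|)
    {x x' v : E n} (hv : v ∈ subdiff f x)
    (hx' : ∀ i, x' i = x i ∨ (x' i = 0 ∧ L * x i ^ 2 ≤ v i * x i)) :
    f x' + L / 2 * ‖x - x'‖ ^ 2 ≤ f x := by
  obtain ⟨s, hs, hvs⟩ := exists_isL1Subgrad_of_mem_subdiff hγ (hg x) hf hv
  have hs' : IsL1Subgrad x' s := fun i => by
    rcases hx' i with h | ⟨h, -⟩
    · rw [h]; exact hs i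
    · rw [h]; simpa using (hs i).1
  have hdecr : ⟪v, x' - x⟫ + L * ‖x' - x‖ ^ 2 ≤ 0 := by
    rw [real_inner_eq_sum, EuclideanSpace.real_norm_sq_eq, Finset.mul_sum,
      ← Finset.sum_add_distrib]
    refine Finset.sum_nonpos fun i _ => ?_
    rcases hx' i with h | ⟨h, hvx⟩
    · simp [h]
    · simp only [PiLp.sub_apply, h]
      nlinarith
  have hdesc := le_add_inner_add_of_isL1Subgrad hg hLip hf hs hs'
  rw [← hvs] at hdesc
  rw [norm_sub_rev]
  linarith

end Composite

section CrossingStep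

variable {n : ℕ} {g f : E n → ℝ} {g' : E n → E n} {μ L γ : ℝ} {x v v' x' x'' : E n}

def IsCrossingSplit (L : ℝ) (x v v' x' x'' : E n) : Prop :=
  ∀ i, (x' i = x i ∧ 0 < (x i - 1 / L * v i) * x i ∧ x'' i = x i - 1 / L * v i) ∨
    (x' i = 0 ∧ (x i - 1 / L * v i) * x i ≤ 0 ∧ x'' i = -(1 / L * v' i))

theorem IsCrossingSplit.add_half_mul_norm_sq_le (hsplit : IsCrossingSplit L x v v' x' x'')
    (hL : 0 < L) (hγ : 0 < γ) (hg : ∀ z, HasGradientAt g (g' z) z)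
    (hLip : ∀ a b, ‖g' a - g' b‖ ≤ L * ‖a - b‖) (hf : ∀ z, f z = g z + γ * ∑ i, |z i|)
    (hv : v ∈ subdiff f x) : f x' + L / 2 * ‖x - x'‖ ^ 2 ≤ f x :=
  add_half_mul_norm_sq_le_of_zero_coords hγ hg hLip hf hv fun i => by
    rcases hsplit i with ⟨h, -, -⟩ | ⟨h, hcross, -⟩
    · exact Or.inl h
    · refine Or.inr ⟨h, ?_⟩
      have := mul_le_mul_of_nonneg_left hcross hL.le
      field_simp at this
      nlinarith

theorem IsCrossingSplit.isL1Subgrad (hsplit : IsCrossingSplit L x v v' x' x'') (hL : 0 < L)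
    (hγ : 0 < γ) (hμ : 0 ≤ μ) (hsc : StronglyConvex μ g) (hg : ∀ z, HasGradientAt g (g' z) z)
    (hf : ∀ z, f z = g z + γ * ∑ i, |z i|) (hv' : IsMinNormSubgrad f x' v') {s' : E n}
    (hs' : IsL1Subgrad x' s') (hv's : v' = g' x' + γ • s') : IsL1Subgrad x'' s' := fun i => by
  refine ⟨(hs' i).1, ?_⟩
  rcases hsplit i with ⟨h', hpos, h''⟩ | ⟨h', -, h''⟩
  · rw [h'']
    exact hs'.mul_eq_abs_of_mul_pos (h' ▸ hpos)
  · have := hv'.mul_eq_neg_abs hγ hμ hsc (hg x') hf hs' hv's h'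
    rw [h'', abs_neg, abs_mul, abs_of_pos (one_div_pos.2 hL)]
    linear_combination (-(1 / L)) * this

theorem IsCrossingSplit.norm_add_smul_sub_le (hsplit : IsCrossingSplit L x v v' x' x'')
    (hL : 0 < L) (hLip : ∀ a b, ‖g' a - g' b‖ ≤ L * ‖a - b‖) {s s' : E n} (hs : IsL1Subgrad x s)
    (hvs : v = g' x + γ • s) (hs' : IsL1Subgrad x' s') (hv's : v' = g' x' + γ • s') :
    ‖v' + L • (x'' - x')‖ ≤ L * ‖x - x'‖ := by
  refine (norm_le_norm_of_forall_abs_le fun i => ?_).trans (hLip x x')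
  rcases hsplit i with ⟨h', hpos, h''⟩ | ⟨h', -, h''⟩
  · have hx0 : x i ≠ 0 := by rintro h; simp [h] at hpos
    have hss : s' i = s i := by
      rw [hs'.apply_eq_sign (h' ▸ hx0), hs.apply_eq_sign hx0, h']
    have : (v' + L • (x'' - x')) i = -(g' x - g' x') i := by
      simp only [PiLp.add_apply, PiLp.smul_apply, PiLp.sub_apply, smul_eq_mul, h', h'', hvs, hv's,
        hss]
      field_simp
      ring
    rw [this, abs_neg]
  · have : (v' + L • (x'' - x')) i = 0 := by
      simp only [PiLp.add_apply, PiLp.smul_apply, PiLp.sub_apply, smul_eq_mul, h', h'']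
      field_simp
      ring
    rw [this, abs_zero]
    exact abs_nonneg _

theorem IsCrossingSplit.le_sub_norm_sq_div (hsplit : IsCrossingSplit L x v v' x' x'') (hL : 0 < L)
    (hγ : 0 < γ) (hμ : 0 ≤ μ) (hsc : StronglyConvex μ g) (hg : ∀ z, HasGradientAt g (g' z) z)
    (hLip : ∀ a b, ‖g' a - g' b‖ ≤ L * ‖a - b‖) (hf : ∀ z, f z = g z + γ * ∑ i, |z i|)
    (hv : v ∈ subdiff f x) (hv' : IsMinNormSubgrad f x' v') :
    f x'' ≤ f x - ‖v'‖ ^ 2 / (2 * L) := by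
  obtain ⟨s, hs, hvs⟩ := exists_isL1Subgrad_of_mem_subdiff hγ (hg x) hf hv
  obtain ⟨s', hs', hv's⟩ := exists_isL1Subgrad_of_mem_subdiff hγ (hg x') hf hv'.1
  have hdecr := hsplit.add_half_mul_norm_sq_le hL hγ hg hLip hf hv
  have hstep := hsplit.norm_add_smul_sub_le hL hLip hs hvs hs' hv's
  have hdesc := le_add_inner_add_of_isL1Subgrad hg hLip hf hs'
    (hsplit.isL1Subgrad hL hγ hμ hsc hg hf hv' hs' hv's)
  rw [← hv's] at hdesc
  linarith [inner_add_half_mul_norm_sq_le hL hstep]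

end CrossingStep

theorem stmt_9_general {n : ℕ} (g : E n → ℝ)
    (μ L γ : ℝ) (hμ : 0 < μ) (hμL : μ < L) (hγ : 0 < γ)
    (hsc : StronglyConvex μ g)
    (g' : E n → E n) (hg' : ∀ z, HasGradientAt g (g' z) z)
    (hLip : ∀ a b, ‖g' a - g' b‖ ≤ L * ‖a - b‖)
    (f : E n → ℝ) (hf : ∀ z, f z = g z + γ * ∑ i, |z i|)
    (x xstar v v' x' x'' : E n)
    (hv : IsMinNormSubgrad f x v)
    (hx' : ∀ i, x' i = if 0 < Real.sign ((x i - (1 / L) * v i) * x i) then x i else 0)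
    (hv' : IsMinNormSubgrad f x' v')
    (hx'' : ∀ i, x'' i = if 0 < Real.sign ((x i - (1 / L) * v i) * x i)
        then x' i - (1 / L) * v i else x' i - (1 / L) * v' i) :
    min (f x') (f x'') - f xstar ≤ (1 + μ / L)⁻¹ * (f x - f xstar) := by
  have hL : 0 < L := hμ.trans hμL
  have hsplit : IsCrossingSplit L x v v' x' x'' := fun i => by
    rw [hx'' i, hx' i]
    simp only [Real.sign_pos_iff]
    split_ifs with h
    · exact Or.inl ⟨rfl, h, rfl⟩
    · exact Or.inr ⟨rfl, not_lt.1 h, zero_sub _⟩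
  have hfx'' := hsplit.le_sub_norm_sq_div hL hγ hμ.le hsc hg' hLip hf hv.1 hv'
  have hfx' := two_mul_sub_le_norm_sq_of_mem_subdiff hμ hγ hsc (hg' x') hf hv'.1 xstar
  have hmin_le : μ / L * (min (f x') (f x'') - f xstar) ≤ ‖v'‖ ^ 2 / (2 * L) :=
    calc μ / L * (min (f x') (f x'') - f xstar) ≤ μ / L * (f x' - f xstar) := by
          gcongr; exact min_le_left _ _
      _ = 2 * μ * (f x' - f xstar) / (2 * L) := by field_simp
      _ ≤ ‖v'‖ ^ 2 / (2 * L) := by gcongr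
  rw [inv_mul_eq_div, le_div_iff₀ (by positivity)]
  linarith [min_le_right (f x') (f x'')]

theorem stmt_9 {n : ℕ} (g : E n → ℝ) (hg1 : ContDiff ℝ 1 g)
    (μ L γ : ℝ) (hμ : 0 < μ) (hμL : μ < L) (hγ : 0 < γ)
    (hsc : StronglyConvex μ g)
    (g' : E n → E n) (hg' : ∀ z, HasGradientAt g (g' z) z)
    (hLip : ∀ a b, ‖g' a - g' b‖ ≤ L * ‖a - b‖)
    (f : E n → ℝ) (hf : ∀ z, f z = g z + γ * ∑ i, |z i|)
    (x xstar v v' x' x'' : E n)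
    (hmin : ∀ z, f xstar ≤ f z)
    (hv : IsMinNormSubgrad f x v)
    (hcross : ∃ i, x i * (x i - (1 / L) * v i) < 0)
    (hx' : ∀ i, x' i = if 0 < Real.sign ((x i - (1 / L) * v i) * x i) then x i else 0)
    (hv' : IsMinNormSubgrad f x' v')
    (hx'' : ∀ i, x'' i = if 0 < Real.sign ((x i - (1 / L) * v i) * x i)
        then x' i - (1 / L) * v i else x' i - (1 / L) * v' i) :
    min (f x') (f x'') - f xstar ≤ (1 + μ / L)⁻¹ * (f x - f xstar) :=
  stmt_9_general g μ L γ hμ hμL hγ hsc g' hg' hLip f hf x xstar v v' x' x'' hv hx' hv' hx''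
end
end

section
/- Let f(x) = g(x) + γ|x|₁ with g : ℝⁿ → ℝ C¹ convex, ∇g L-Lipschitz, γ > 0. Let q, q' ∈ ℝⁿ with sign(qᵢ·q'ᵢ) ≥ 0 for all i, let p = (q' − q)/√h, and define ξ⁺ = {i : qᵢ > 0 or q'ᵢ > 0}, ξ⁻ = {i : qᵢ < 0 or q'ᵢ < 0}, and the vector w with wᵢ = ∂ᵢg(q') + γ for i ∈ ξ⁺, wᵢ = ∂ᵢg(q') − γ for i ∈ ξ⁻, wᵢ = ∂ᵢg(q') otherwise. If ⟨w, p⟩ ≤ 0, then f(q') ≤ f(q). -/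
open scoped RealInnerProductSpace BigOperators
open scoped Classical

noncomputable section

/-!
On the closed orthant-face containing `q` and `q'` (their coordinates never have opposite signs),
`γ‖·‖₁` is the linear map `z ↦ γ ∑ sᵢ zᵢ` with `sᵢ ∈ {1, -1, 0}` the common sign pattern, so there
`f` agrees with the convex `C¹` function `g + γ⟪s, ·⟫`, whose gradient at `q'` is `w`. The tangent
inequality for this function at `q'` gives `f q ≥ f q' + ⟪w, q - q'⟫`, and
`⟪w, q - q'⟫ = -√h ⟪w, p⟫ ≥ 0`.
-/

theorem ConvexOn.add_inner_le_of_hasGradientAt {F : Type*} [NormedAddCommGroup F]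
    [InnerProductSpace ℝ F] [CompleteSpace F] {g : F → ℝ} (hg : ConvexOn ℝ Set.univ g)
    {x v : F} (hv : HasGradientAt g v x) (y : F) : g x + ⟪v, y - x⟫ ≤ g y := by
  have hv' : HasFDerivAt g (InnerProductSpace.toDual ℝ F v) (AffineMap.lineMap x y (0 : ℝ)) := by
    simpa using hv.hasFDerivAt
  have hline : HasDerivAt (g ∘ AffineMap.lineMap x y) ⟪v, y - x⟫ (0 : ℝ) := by
    simpa using hv'.comp_hasDerivAt (0 : ℝ) AffineMap.hasDerivAt_lineMap
  have hslope := (hg.comp_affineMap (AffineMap.lineMap x y)).le_slope_of_hasDerivAt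
    (Set.mem_univ 0) (Set.mem_univ 1) zero_lt_one hline
  simp only [slope_def_field, Function.comp_apply, AffineMap.lineMap_apply_one,
    AffineMap.lineMap_apply_zero, sub_zero, div_one] at hslope
  linarith

theorem Real.nonneg_of_sign_nonneg {r : ℝ} (hr : 0 ≤ Real.sign r) : 0 ≤ r := by
  by_contra! hneg
  rw [Real.sign_of_neg hneg] at hr
  norm_num at hr

theorem ite_mul_sub_eq_mul_sub_add_abs_sub_abs {a b : ℝ} (hab : 0 ≤ a * b) (c γ : ℝ) :
    (if 0 < a ∨ 0 < b then c + γ else if a < 0 ∨ b < 0 then c - γ else c) * (a - b) =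
      c * (a - b) + γ * (|a| - |b|) := by
  rcases lt_trichotomy a 0 with ha | rfl | ha <;> rcases lt_trichotomy b 0 with hb | rfl | hb
  all_goals first
    | nlinarith
    | simp [ha, hb, ha.not_gt, hb.not_gt, abs_of_neg, abs_of_pos]; ring
    | simp [ha, ha.not_gt, abs_of_neg, abs_of_pos]; ring
    | simp [hb, hb.not_gt, abs_of_neg, abs_of_pos]; ring

theorem EuclideanSpace.inner_sub_eq_inner_add_mul_sum_abs_sub {ι : Type*} [Fintype ι]
    (v w x y : EuclideanSpace ℝ ι) (γ : ℝ) (hxy : ∀ i, 0 ≤ x i * y i)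
    (hw : ∀ i, w i = if 0 < x i ∨ 0 < y i then v i + γ
        else if x i < 0 ∨ y i < 0 then v i - γ else v i) :
    ⟪w, x - y⟫ = ⟪v, x - y⟫ + γ * (∑ i, |x i| - ∑ i, |y i|) := by
  simp only [PiLp.inner_apply, RCLike.inner_apply, conj_trivial, PiLp.sub_apply]
  rw [← Finset.sum_sub_distrib, Finset.mul_sum, ← Finset.sum_add_distrib]
  exact Finset.sum_congr rfl fun i _ => by
    rw [hw i, mul_comm, mul_comm (x i - y i) (v i)]
    exact ite_mul_sub_eq_mul_sub_add_abs_sub_abs (hxy i) _ _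

theorem stmt_14_general {n : ℕ} (g : E n → ℝ) (hgc : ConvexOn ℝ Set.univ g)
    (g' : E n → E n) (hg' : ∀ z, HasGradientAt g (g' z) z)
    (γ : ℝ)
    (f : E n → ℝ) (hf : ∀ z, f z = g z + γ * ∑ i, |z i|)
    (h : ℝ) (hh : 0 < h) (q q' p w : E n)
    (hsign : ∀ i, 0 ≤ Real.sign (q i * q' i))
    (hp : p = (Real.sqrt h)⁻¹ • (q' - q))
    (hw : ∀ i, w i = if 0 < q i ∨ 0 < q' i then g' q' i + γ
        else if q i < 0 ∨ q' i < 0 then g' q' i - γ else g' q' i)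
    (hwp : (inner ℝ w p : ℝ) ≤ 0) :
    f q' ≤ f q := by
  have hdescent : 0 ≤ ⟪w, q - q'⟫ := by
    have hqq' : q - q' = -√h • p := by
      rw [hp, smul_smul, neg_mul, mul_inv_cancel₀ (Real.sqrt_pos.2 hh).ne', neg_one_smul, neg_sub]
    rw [hqq', real_inner_smul_right]
    nlinarith [Real.sqrt_nonneg h]
  have hsplit := EuclideanSpace.inner_sub_eq_inner_add_mul_sum_abs_sub (g' q') w q q' γ
    (fun i => Real.nonneg_of_sign_nonneg (hsign i)) hw
  have htangent := hgc.add_inner_le_of_hasGradientAt (hg' q') q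
  rw [hf, hf]
  linarith

theorem stmt_14 {n : ℕ} (g : E n → ℝ) (hgc : ConvexOn ℝ Set.univ g)
    (hg1 : ContDiff ℝ 1 g) (g' : E n → E n) (hg' : ∀ z, HasGradientAt g (g' z) z)
    (L γ : ℝ) (hL : 0 < L) (hγ : 0 < γ)
    (hLip : ∀ a b, ‖g' a - g' b‖ ≤ L * ‖a - b‖)
    (f : E n → ℝ) (hf : ∀ z, f z = g z + γ * ∑ i, |z i|)
    (h : ℝ) (hh : 0 < h) (q q' p w : E n)
    (hsign : ∀ i, 0 ≤ Real.sign (q i * q' i))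
    (hp : p = (Real.sqrt h)⁻¹ • (q' - q))
    (hw : ∀ i, w i = if 0 < q i ∨ 0 < q' i then g' q' i + γ
        else if q i < 0 ∨ q' i < 0 then g' q' i - γ else g' q' i)
    (hwp : (inner ℝ w p : ℝ) ≤ 0) :
    f q' ≤ f q :=
  stmt_14_general g hgc g' hg' γ f hf h hh q q' p w hsign hp hw hwp
end
end

section
/- Let f : ℝⁿ → ℝ be μ-strongly convex with minimizer x*, and suppose points x, x', x'' ∈ ℝⁿ satisfy f(x'') ≤ f(x) − (1/(2L))|∂⁻f(x')|₂² with L ≥ μ > 0. Then min(f(x'), f(x'')) − f(x*) ≤ (1 + μ/L)⁻¹ (f(x) − f(x*)). -/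
open scoped RealInnerProductSpace BigOperators
open scoped Classical

noncomputable section

/-!
Strong convexity upgrades the subgradient inequality at `x'` by the term `μ/2 ‖z - x'‖²`;
minimising over `‖z - x'‖` gives the non-smooth PL inequality `2μ (f x' - f z) ≤ ‖v'‖²` for every
`z`. Hence the decrease hypothesis yields `f x'' ≤ f x - (μ/L) (f x' - f x⋆)`, and the minimum `m`
of `f x'` and `f x''` satisfies `m ≤ f x - (μ/L) (m - f x⋆)`, which rearranges to the claim.
-/

lemma le_of_forall_mem_Ioc_le_add_mul {a b c : ℝ} (h : ∀ t ∈ Set.Ioc (0 : ℝ) 1, a ≤ b + t * c) :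
    a ≤ b := by
  have hlim : Filter.Tendsto (fun t : ℝ => b + t * c) (nhdsWithin 0 (Set.Ioi 0)) (nhds b) := by
    have hcont : Continuous fun t : ℝ => b + t * c := by fun_prop
    simpa using (hcont.tendsto 0).mono_left nhdsWithin_le_nhds
  refine ge_of_tendsto hlim ?_
  filter_upwards [Ioo_mem_nhdsGT (zero_lt_one' ℝ)] with t ht
  exact h t (Set.Ioo_subset_Ioc_self ht)

lemma StronglyConvex.add_inner_add_sq_le {n : ℕ} {μ : ℝ} {f : E n → ℝ} (hsc : StronglyConvex μ f)
    {x v : E n} (hv : v ∈ subdiff f x) (z : E n) :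
    f x + ⟪v, z - x⟫ + μ / 2 * ‖z - x‖ ^ 2 ≤ f z := by
  set w := z - x
  suffices ∀ t ∈ Set.Ioc (0 : ℝ) 1, ⟪v, w⟫ + μ / 2 * ‖w‖ ^ 2 ≤ f z - f x + t * (μ / 2 * ‖w‖ ^ 2) by
    linarith [le_of_forall_mem_Ioc_le_add_mul this]
  rintro t ⟨ht0, ht1⟩
  have hconv := hsc.2 (Set.mem_univ x) (Set.mem_univ z) (sub_nonneg.2 ht1) ht0.le (by ring)
  have hpt : (1 - t) • x + t • z = x + t • w := by simp only [w]; module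
  have hsub := hv (x + t • w)
  rw [hpt] at hconv
  rw [add_sub_cancel_left, real_inner_smul_right] at hsub
  have hxt : ‖x + t • w‖ ^ 2 = ‖x‖ ^ 2 + 2 * (t * ⟪x, w⟫) + t ^ 2 * ‖w‖ ^ 2 := by
    rw [norm_add_sq_real, real_inner_smul_right, norm_smul, mul_pow, Real.norm_eq_abs, sq_abs]
  have hz : ‖z‖ ^ 2 = ‖x‖ ^ 2 + 2 * ⟪x, w⟫ + ‖w‖ ^ 2 := by
    rw [← norm_add_sq_real, add_sub_cancel]
  simp only [smul_eq_mul, hxt, hz] at hconv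
  -- `hconv` with `hsub` substituted is `t` times the claim
  have key : t * (⟪v, w⟫ + μ / 2 * ‖w‖ ^ 2 - (f z - f x + t * (μ / 2 * ‖w‖ ^ 2))) ≤ 0 := by
    nlinarith
  nlinarith

/-- Non-smooth Polyak–Łojasiewicz inequality. -/
lemma StronglyConvex.two_mul_sub_le_norm_sq {n : ℕ} {μ : ℝ} (hμ : 0 < μ) {f : E n → ℝ}
    (hsc : StronglyConvex μ f) {x v : E n} (hv : v ∈ subdiff f x) (z : E n) :
    2 * μ * (f x - f z) ≤ ‖v‖ ^ 2 := by
  have hgrowth := hsc.add_inner_add_sq_le hv z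
  have hcs : -(‖v‖ * ‖z - x‖) ≤ ⟪v, z - x⟫ := neg_le_of_abs_le (abs_real_inner_le_norm v (z - x))
  nlinarith [sq_nonneg (μ * ‖z - x‖ - ‖v‖)]

lemma min_sub_le_inv_one_add_mul {a b c d κ : ℝ} (hκ : 0 ≤ κ) (h : b ≤ c - κ * (a - d)) :
    min a b - d ≤ (1 + κ)⁻¹ * (c - d) := by
  have hκa : κ * (min a b - d) ≤ κ * (a - d) := by gcongr; exact min_le_left a b
  rw [inv_mul_eq_div, le_div_iff₀ (by positivity)]
  linarith [min_le_right a b]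

theorem stmt_19_general {n : ℕ} (μ L : ℝ) (hμ : 0 < μ) (hμL : μ ≤ L)
    (f : E n → ℝ) (hsc : StronglyConvex μ f) (xstar : E n)
    (x x' x'' v' : E n) (hv' : IsMinNormSubgrad f x' v')
    (hdec : f x'' ≤ f x - 1 / (2 * L) * ‖v'‖ ^ 2) :
    min (f x') (f x'') - f xstar ≤ (1 + μ / L)⁻¹ * (f x - f xstar) := by
  have hL : 0 < L := hμ.trans_le hμL
  have hPL := hsc.two_mul_sub_le_norm_sq hμ hv'.1 xstar
  have hstep : μ / L * (f x' - f xstar) ≤ 1 / (2 * L) * ‖v'‖ ^ 2 := by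
    calc μ / L * (f x' - f xstar) = 1 / (2 * L) * (2 * μ * (f x' - f xstar)) := by
          field_simp
      _ ≤ 1 / (2 * L) * ‖v'‖ ^ 2 := by gcongr
  exact min_sub_le_inv_one_add_mul (by positivity) (by linarith)

theorem stmt_19 {n : ℕ} (μ L : ℝ) (hμ : 0 < μ) (hμL : μ ≤ L)
    (f : E n → ℝ) (hfc : ConvexOn ℝ Set.univ f) (hsc : StronglyConvex μ f)
    (xstar : E n) (hmin : ∀ z, f xstar ≤ f z)
    (x x' x'' v' : E n) (hv' : IsMinNormSubgrad f x' v')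
    (hdec : f x'' ≤ f x - 1 / (2 * L) * ‖v'‖ ^ 2) :
    min (f x') (f x'') - f xstar ≤ (1 + μ / L)⁻¹ * (f x - f xstar) :=
  stmt_19_general μ L hμ hμL f hsc xstar x x' x'' v' hv' hdec
end
end
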